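/- arXiv:1510.03950 — 7 statements merged into one kernel-verified Lean document; each statement's English description precedes it below -/
import Mathlib

section
/- For any real numbers x, y, ε_x, ε_y with x ≠ 0 and y ≠ 0, if |ε_x/x| ≤ 1/2 and |ε_y/y| ≤ 1/2, then |(x+ε_x)/(y+ε_y) - x/y| ≤ (|ε_x·y| + 3|ε_y·x|)/y². -/
/-!
Write `(x + εx) / (y + εy) - x / y = εx / y - εy (x + εx) / (y (y + εy))`. The first term has
absolute value exactly `|εx y| / y²`. In the second, `|x + εx| ≤ 3/2 |x|` and
`|y + εy| ≥ |y| / 2`, which together cost the factor `3`.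
-/

lemma abs_le_half_of_abs_div_le_half {a b : ℝ} (hb : b ≠ 0) (h : |a / b| ≤ 1 / 2) :
    |a| ≤ |b| / 2 := by
  rw [abs_div, div_le_iff₀ (abs_pos.mpr hb)] at h
  linarith

lemma half_abs_le_abs_add {y e : ℝ} (he : |e| ≤ |y| / 2) : |y| / 2 ≤ |y + e| := by
  linarith [abs_sub_abs_le_abs_add y e]

lemma div_add_sub_div_eq {x y εx εy : ℝ} (hy : y ≠ 0) (hd : y + εy ≠ 0) :
    (x + εx) / (y + εy) - x / y = εx / y - εy * (x + εx) / (y * (y + εy)) := by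
  field_simp
  ring

lemma abs_div_eq_abs_mul_div_sq (a y : ℝ) : |a / y| = |a * y| / y ^ 2 := by
  rcases eq_or_ne y 0 with rfl | hy
  · simp
  rw [abs_div, abs_mul, ← sq_abs y, eq_div_iff (by positivity)]
  field_simp

lemma abs_mul_add_div_mul_add_le {x y εx εy : ℝ} (hy : y ≠ 0) (hεx : |εx| ≤ |x| / 2)
    (hd : |y| / 2 ≤ |y + εy|) :
    |εy * (x + εx) / (y * (y + εy))| ≤ 3 * |εy * x| / y ^ 2 := by
  have hnum : |x + εx| ≤ 3 / 2 * |x| := by linarith [abs_add_le x εx]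
  have hden : y ^ 2 / 2 ≤ |y * (y + εy)| := by
    rw [abs_mul, ← sq_abs y]
    nlinarith [abs_nonneg y]
  have hden_pos : 0 < |y * (y + εy)| := (by positivity : 0 < y ^ 2 / 2).trans_le hden
  rw [abs_mul εy x, abs_div, div_le_div_iff₀ hden_pos (by positivity)]
  calc |εy * (x + εx)| * y ^ 2 ≤ |εy| * (3 / 2 * |x|) * y ^ 2 := by
        rw [abs_mul]; gcongr
    _ = 3 * (|εy| * |x|) * (y ^ 2 / 2) := by ring
    _ ≤ 3 * (|εy| * |x|) * |y * (y + εy)| := by gcongr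

theorem abs_div_add_sub_div_le {x y εx εy : ℝ} (hy : y ≠ 0) (hεx : |εx| ≤ |x| / 2)
    (hεy : |εy| ≤ |y| / 2) :
    |(x + εx) / (y + εy) - x / y| ≤ (|εx * y| + 3 * |εy * x|) / y ^ 2 := by
  have hd := half_abs_le_abs_add hεy
  have hd0 : y + εy ≠ 0 := abs_pos.mp ((half_pos (abs_pos.mpr hy)).trans_le hd)
  rw [div_add_sub_div_eq hy hd0, add_div]
  calc _ ≤ |εx / y| + |εy * (x + εx) / (y * (y + εy))| := abs_sub _ _
    _ ≤ _ := add_le_add (abs_div_eq_abs_mul_div_sq εx y).le (abs_mul_add_div_mul_add_le hy hεx hd)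

theorem stmt_0 (x y εx εy : ℝ) (hx : x ≠ 0) (hy : y ≠ 0)
    (h1 : |εx / x| ≤ 1 / 2) (h2 : |εy / y| ≤ 1 / 2) :
    |(x + εx) / (y + εy) - x / y| ≤ (|εx * y| + 3 * |εy * x|) / y ^ 2 :=
  abs_div_add_sub_div_le hy (abs_le_half_of_abs_div_le_half hx h1)
    (abs_le_half_of_abs_div_le_half hy h2)
end

section
/- Let a, d, m, n, r be positive integers and let G be a graph on n vertices with average degree d = 2|E(G)|/n. If there is a positive integer t such that d^t/n^{t-1} - n^r·(m/n)^t ≥ a, then G contains a subset U of at least a vertices such that every r vertices in U have at least m common neighbors. -/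
/-!
Dependent random choice, with the random choice replaced by averaging. For a `t`-tuple `w` of
vertices let `A w` be its common neighbourhood. Summed over all `n ^ t` tuples,
`∑ |A w| = ∑ v, deg v ^ t ≥ n d ^ t` by the power mean inequality, while an `r`-set `S` lies in
`A w` for exactly `|N(S)| ^ t` tuples, so the `r`-sets with fewer than `m` common neighbours
are counted at most `C(n, r) m ^ t ≤ n ^ r m ^ t` times in total. Multiplying the hypothesis by
`n ^ t`, some tuple has at least `a` more vertices in `A w` than bad `r`-sets inside `A w`, and
deleting one vertex of each of these bad sets from `A w` leaves the required set.
-/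

open Finset

namespace Finset

variable {α : Type*} [DecidableEq α]

theorem exists_subset_card_sub_le_forall_not_subset (A : Finset α) (𝒮 : Finset (Finset α))
    (h𝒮 : ∀ S ∈ 𝒮, S.Nonempty) :
    ∃ U ⊆ A, #A - #𝒮 ≤ #U ∧ ∀ S ∈ 𝒮, ¬ S ⊆ U := by
  choose pick hpick using h𝒮
  set removed := 𝒮.attach.image fun S => pick S.1 S.2
  refine ⟨A \ removed, sdiff_subset, ?_, fun S hS hSU => ?_⟩
  · calc #A - #𝒮 = #A - #𝒮.attach := by rw [card_attach]
      _ ≤ #A - #removed := Nat.sub_le_sub_left card_image_le _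
      _ ≤ #(A \ removed) := le_card_sdiff _ _
  · exact (mem_sdiff.mp (hSU (hpick S hS))).2 (mem_image.mpr ⟨⟨S, hS⟩, mem_attach _ _, rfl⟩)

theorem card_mul_pow_le_sum_pow {ι : Type*} (s : Finset ι) (f : ι → ℕ) (d t : ℕ)
    (hsum : ∑ i ∈ s, f i = d * #s) : #s * d ^ t ≤ ∑ i ∈ s, f i ^ t := by
  obtain _ | t := t
  · simp
  obtain hs | hs := (#s).eq_zero_or_pos
  · simp [hs]
  refine Nat.le_of_mul_le_mul_left ?_ (pow_pos hs t)
  calc #s ^ t * (#s * d ^ (t + 1)) = (∑ i ∈ s, f i) ^ (t + 1) := by rw [hsum]; ring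
    _ ≤ #s ^ t * ∑ i ∈ s, f i ^ (t + 1) :=
      mod_cast pow_sum_le_card_mul_sum_pow (fun _ _ => Nat.zero_le _) t

end Finset

namespace SimpleGraph

variable {V : Type*} [Fintype V] [DecidableEq V] (G : SimpleGraph V) [DecidableRel G.Adj]

-- `DecidableEq V` enters through the decidability instance of the filter predicate.
def commonNeighborFinset (S : Finset V) : Finset V := univ.filter fun v => ∀ u ∈ S, G.Adj u v

variable {G}

@[simp]
theorem mem_commonNeighborFinset {S : Finset V} {v : V} :
    v ∈ G.commonNeighborFinset S ↔ ∀ u ∈ S, G.Adj u v := by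
  simp [commonNeighborFinset]

theorem subset_commonNeighborFinset_comm {S T : Finset V} :
    S ⊆ G.commonNeighborFinset T ↔ T ⊆ G.commonNeighborFinset S := by
  simp only [subset_iff, mem_commonNeighborFinset]
  exact ⟨fun h u hu v hv => (h hv u hu).symm, fun h u hu v hv => (h hv u hu).symm⟩

theorem commonNeighborFinset_singleton (v : V) :
    G.commonNeighborFinset {v} = G.neighborFinset v := by
  ext u
  simp [G.adj_comm]

theorem card_filter_subset_commonNeighborFinset_image (S : Finset V) (t : ℕ) :
    #{w : Fin t → V | S ⊆ G.commonNeighborFinset (univ.image w)} =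
      #(G.commonNeighborFinset S) ^ t := by
  rw [← Fintype.card_piFinset_const]
  congr 1
  ext w
  simp [subset_commonNeighborFinset_comm (S := S), image_subset_iff, Fintype.mem_piFinset]

theorem sum_card_filter_subset_commonNeighborFinset_image (𝒮 : Finset (Finset V)) (t : ℕ) :
    ∑ w : Fin t → V, #{S ∈ 𝒮 | S ⊆ G.commonNeighborFinset (univ.image w)} =
      ∑ S ∈ 𝒮, #(G.commonNeighborFinset S) ^ t := by
  simp only [card_filter]
  rw [sum_comm]
  refine sum_congr rfl fun S _ => ?_
  rw [← card_filter, card_filter_subset_commonNeighborFinset_image]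

theorem sum_card_commonNeighborFinset_image (t : ℕ) :
    ∑ w : Fin t → V, #(G.commonNeighborFinset (univ.image w)) = ∑ v, G.degree v ^ t := by
  have hsingleton (w : Fin t → V) : #(G.commonNeighborFinset (univ.image w)) =
      #{v | {v} ⊆ G.commonNeighborFinset (univ.image w)} := by
    simp only [singleton_subset_iff, filter_mem_eq_inter, univ_inter]
  simp only [hsingleton, card_filter]
  rw [sum_comm]
  refine sum_congr rfl fun v _ => ?_
  rw [← card_filter, card_filter_subset_commonNeighborFinset_image,
    commonNeighborFinset_singleton, card_neighborFinset_eq_degree]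

variable (G) in
theorem exists_tuple_add_card_filter_subset_le [Nonempty V] (𝒮 : Finset (Finset V)) (a t : ℕ)
    (h : a * Fintype.card V ^ t + ∑ S ∈ 𝒮, #(G.commonNeighborFinset S) ^ t ≤
      ∑ v, G.degree v ^ t) :
    ∃ w : Fin t → V, a + #{S ∈ 𝒮 | S ⊆ G.commonNeighborFinset (univ.image w)} ≤
      #(G.commonNeighborFinset (univ.image w)) := by
  have hsum : ∑ w : Fin t → V, (a + #{S ∈ 𝒮 | S ⊆ G.commonNeighborFinset (univ.image w)}) ≤
      ∑ w : Fin t → V, #(G.commonNeighborFinset (univ.image w)) := by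
    rwa [sum_add_distrib, sum_card_filter_subset_commonNeighborFinset_image,
      sum_card_commonNeighborFinset_image, sum_const, card_univ, Fintype.card_pi_const,
      smul_eq_mul, mul_comm]
  obtain ⟨w, -, hw⟩ := exists_le_of_sum_le univ_nonempty hsum
  exact ⟨w, hw⟩

variable (G) in
theorem dependent_random_choice [Nonempty V] {a m r t : ℕ} (hr : 0 < r)
    (h : a * Fintype.card V ^ t + (Fintype.card V).choose r * m ^ t ≤ ∑ v, G.degree v ^ t) :
    ∃ U : Finset V, a ≤ #U ∧ ∀ S ⊆ U, #S = r → m ≤ #(G.commonNeighborFinset S) := by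
  set bad : Finset (Finset V) := {S ∈ univ.powersetCard r | #(G.commonNeighborFinset S) < m}
  have hbad : ∑ S ∈ bad, #(G.commonNeighborFinset S) ^ t ≤ (Fintype.card V).choose r * m ^ t :=
    calc ∑ S ∈ bad, #(G.commonNeighborFinset S) ^ t ≤ ∑ _S ∈ bad, m ^ t :=
          sum_le_sum fun S hS => Nat.pow_le_pow_left (mem_filter.mp hS).2.le t
      _ = #bad * m ^ t := by rw [sum_const, smul_eq_mul]
      _ ≤ (Fintype.card V).choose r * m ^ t := by
          gcongr
          exact (card_filter_le _ _).trans (by rw [card_powersetCard, card_univ])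
  obtain ⟨w, hw⟩ := G.exists_tuple_add_card_filter_subset_le bad a t (by omega)
  set A := G.commonNeighborFinset (univ.image w)
  have hnonempty : ∀ S ∈ {S ∈ bad | S ⊆ A}, S.Nonempty := fun S hS =>
    card_pos.mp (by simp_all [bad, mem_powersetCard])
  obtain ⟨U, hUA, hUcard, hU⟩ := A.exists_subset_card_sub_le_forall_not_subset _ hnonempty
  refine ⟨U, by omega, fun S hSU hScard => ?_⟩
  by_contra! hlt
  exact hU S (by simp [bad, mem_powersetCard, hScard, hlt, hSU.trans hUA]) hSU

end SimpleGraph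

theorem stmt_5_general {V : Type*} [Fintype V] [DecidableEq V] (G : SimpleGraph V)
    [DecidableRel G.Adj] (a d m n r t : ℕ)
    (hn : 0 < n) (hr : 0 < r) (ht : 0 < t)
    (hcard : Fintype.card V = n) (havg : d * n = 2 * G.edgeFinset.card)
    (hcond : (a : ℝ) ≤ (d : ℝ) ^ t / (n : ℝ) ^ (t - 1) - (n : ℝ) ^ r * ((m : ℝ) / n) ^ t) :
    ∃ U : Finset V, a ≤ U.card ∧ ∀ S ⊆ U, S.card = r →
      m ≤ (Finset.univ.filter (fun v => ∀ u ∈ S, G.Adj u v)).card := by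
  have : Nonempty V := Fintype.card_pos_iff.mp (hcard ▸ hn)
  have hjensen : n * d ^ t ≤ ∑ v, G.degree v ^ t := by
    refine hcard ▸ card_mul_pow_le_sum_pow univ _ d t ?_
    rw [G.sum_degrees_eq_twice_card_edges, card_univ, hcard, havg]
  have hcleared : a * n ^ t + n ^ r * m ^ t ≤ n * d ^ t := by
    have hn' : (0 : ℝ) < n := by exact_mod_cast hn
    have hpow : (n : ℝ) ^ t = n ^ (t - 1) * n := by rw [← pow_succ, Nat.sub_add_cancel ht]
    have : (a : ℝ) * n ^ t ≤ n * d ^ t - n ^ r * m ^ t :=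
      calc (a : ℝ) * n ^ t ≤ (d ^ t / n ^ (t - 1) - n ^ r * (m / n) ^ t) * n ^ t := by gcongr
        _ = n * d ^ t - n ^ r * m ^ t := by rw [div_pow, hpow]; field_simp
    exact_mod_cast (le_sub_iff_add_le.mp this)
  refine G.dependent_random_choice (t := t) hr ?_
  calc a * Fintype.card V ^ t + (Fintype.card V).choose r * m ^ t
      ≤ a * n ^ t + n ^ r * m ^ t := by rw [hcard]; gcongr; exact Nat.choose_le_pow n r
    _ ≤ ∑ v, G.degree v ^ t := hcleared.trans hjensen

theorem stmt_5 {V : Type*} [Fintype V] [DecidableEq V] (G : SimpleGraph V)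
    [DecidableRel G.Adj] (a d m n r t : ℕ)
    (ha : 0 < a) (hd : 0 < d) (hm : 0 < m) (hn : 0 < n) (hr : 0 < r) (ht : 0 < t)
    (hcard : Fintype.card V = n) (havg : d * n = 2 * G.edgeFinset.card)
    (hcond : (a : ℝ) ≤ (d : ℝ) ^ t / (n : ℝ) ^ (t - 1) - (n : ℝ) ^ r * ((m : ℝ) / n) ^ t) :
    ∃ U : Finset V, a ≤ U.card ∧ ∀ S ⊆ U, S.card = r →
      m ≤ (Finset.univ.filter (fun v => ∀ u ∈ S, G.Adj u v)).card :=
  stmt_5_general G a d m n r t hn hr ht hcard havg hcond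
end

section
/- Let s ≥ r ≥ 1 be integers and 0 < δ < 1. Suppose G is a K_{s+r}-free graph on n vertices containing a subset U of size at least n^δ such that every r vertices of U have at least n^δ common neighbors. Then α_s(G) ≥ n^δ. -/
open Classical in
/-- The `s`-independence number: the maximum number of vertices of an induced
`K_s`-free subgraph of `G`. -/
noncomputable def alphaS {V : Type*} [Fintype V] (G : SimpleGraph V) (s : ℕ) : ℕ :=
  ((Finset.univ : Finset (Finset V)).filter
    (fun A : Finset V => (G.induce (A : Set V)).CliqueFree s)).sup Finset.card

/-!
If `U` itself is `K_s`-free it witnesses the bound. Otherwise `U` contains an `s`-clique, and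
any `r ≤ s` of its vertices form an `r`-clique `W`; a `K_s` inside the common neighbourhood of
`W` would extend `W` to a `K_{s+r}`, so that common neighbourhood, of size at least `n^δ` by
hypothesis, is `K_s`-free.
-/

namespace SimpleGraph

variable {V : Type*} (G : SimpleGraph V)

theorem ncard_le_alphaS [Fintype V] {s : ℕ} (A : Set V) (hA : G.CliqueFreeOn A s) :
    A.ncard ≤ alphaS G s := by
  classical
  rw [Set.ncard_eq_toFinset_card']
  refine Finset.le_sup (f := Finset.card) (Finset.mem_filter.2 ⟨Finset.mem_univ _, ?_⟩)
  rwa [cliqueFree_induce_iff, Set.coe_toFinset]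

variable {G}

theorem CliqueFree.cliqueFreeOn_commonNeighbors {s r : ℕ} (hG : G.CliqueFree (s + r))
    {W : Finset V} (hW : G.IsNClique r W) : G.CliqueFreeOn {v | ∀ u ∈ W, G.Adj u v} s := by
  classical
  intro C hCN hC
  have hdisj : Disjoint C W :=
    Finset.disjoint_left.2 fun a haC haW => G.loopless.irrefl a (hCN haC a haW)
  refine hG (C ∪ W) ⟨?_, ?_⟩
  · rw [Finset.coe_union]
    exact Set.pairwise_union.2
      ⟨hC.isClique, hW.isClique, fun a ha b hb _ => ⟨(hCN ha b hb).symm, hCN ha b hb⟩⟩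
  · rw [Finset.card_union_of_disjoint hdisj, hC.card_eq, hW.card_eq]

end SimpleGraph

theorem stmt_7_general {V : Type*} [Fintype V] (G : SimpleGraph V) (s r : ℕ) (δ : ℝ)
    (hrs : r ≤ s)
    (hG : G.CliqueFree (s + r))
    (U : Finset V) (hU : (Fintype.card V : ℝ) ^ δ ≤ U.card)
    (hcommon : ∀ S ⊆ U, S.card = r →
      (Fintype.card V : ℝ) ^ δ ≤ ({v : V | ∀ u ∈ S, G.Adj u v}.ncard : ℝ)) :
    (Fintype.card V : ℝ) ^ δ ≤ alphaS G s := by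
  by_cases hUfree : G.CliqueFreeOn U s
  · exact hU.trans (by exact_mod_cast Set.ncard_coe_finset U ▸ G.ncard_le_alphaS _ hUfree)
  obtain ⟨K, hKU, hK⟩ : ∃ K : Finset V, (K : Set V) ⊆ U ∧ G.IsNClique s K := by
    simpa [SimpleGraph.CliqueFreeOn] using hUfree
  obtain ⟨W, hWK, hWcard⟩ := Finset.exists_subset_card_eq (hK.card_eq ▸ hrs)
  have hW : G.IsNClique r W := ⟨hK.isClique.subset (Finset.coe_subset.2 hWK), hWcard⟩
  calc (Fintype.card V : ℝ) ^ δ ≤ ({v : V | ∀ u ∈ W, G.Adj u v}.ncard : ℝ) :=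
        hcommon W (hWK.trans (Finset.coe_subset.1 hKU)) hWcard
    _ ≤ alphaS G s := by
        exact_mod_cast G.ncard_le_alphaS _ (hG.cliqueFreeOn_commonNeighbors hW)

theorem stmt_7 {V : Type*} [Fintype V] (G : SimpleGraph V) (s r : ℕ) (δ : ℝ)
    (hr : 1 ≤ r) (hrs : r ≤ s) (hδ0 : 0 < δ) (hδ1 : δ < 1)
    (hG : G.CliqueFree (s + r))
    (U : Finset V) (hU : (Fintype.card V : ℝ) ^ δ ≤ U.card)
    (hcommon : ∀ S ⊆ U, S.card = r →
      (Fintype.card V : ℝ) ^ δ ≤ ({v : V | ∀ u ∈ S, G.Adj u v}.ncard : ℝ)) :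
    (Fintype.card V : ℝ) ^ δ ≤ alphaS G s :=
  stmt_7_general G s r δ hrs hG U hU hcommon
end

section
/- Let s ≥ r ≥ 1 and 0 < δ < 1. Then RT_s(n, K_{s+r}, n^δ) < n^{2-(1-δ)²/(r-δ)} if (r-δ)/(1-δ) is an integer, and RT_s(n, K_{s+r}, n^δ) < n^{2-(1-δ)²/(r+1-2δ)} otherwise. Equivalently, every K_{s+r}-free graph G on n vertices with at least n^{2-(1-δ)/⌈(r-δ)/(1-δ)⌉} edges satisfies α_s(G) ≥ n^δ. -/
open Finset

theorem Finset.exists_card_le_forall_exists_mem_mem {α : Type*} [DecidableEq α]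
    (𝓑 : Finset (Finset α)) (h𝓑 : ∀ B ∈ 𝓑, B.Nonempty) :
    ∃ H : Finset α, #H ≤ #𝓑 ∧ ∀ B ∈ 𝓑, ∃ x ∈ B, x ∈ H := by
  choose p hp using h𝓑
  exact ⟨𝓑.attach.image fun B => p B.1 B.2, card_image_le.trans card_attach.le,
    fun B hB => ⟨p B hB, hp B hB, mem_image_of_mem _ (mem_attach _ ⟨B, hB⟩)⟩⟩

theorem Real.pow_mul_add_pow_mul_rpow_pow_le {x δ : ℝ} (hx : 1 ≤ x) {k r : ℕ}
    (hkr : r - δ ≤ (k + 1) * (1 - δ)) :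
    x ^ k * (x ^ (k + 1) * x ^ δ + x ^ r * (x ^ δ) ^ (k + 1)) ≤
      (2 * x ^ (2 - (1 - δ) / (k + 1))) ^ (k + 1) := by
  have hx0 : 0 < x := by linarith
  have hmain : x ^ k * (x ^ (k + 1) * x ^ δ) = x ^ (2 * k + 1 + δ) := by
    rw [← rpow_natCast, ← rpow_natCast, ← rpow_add hx0, ← rpow_add hx0]
    push_cast
    ring_nf
  have hbad : x ^ k * (x ^ r * (x ^ δ) ^ (k + 1)) ≤ x ^ (2 * k + 1 + δ) := by
    rw [← rpow_natCast, ← rpow_natCast, ← rpow_natCast, ← rpow_mul hx0.le, ← rpow_add hx0,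
      ← rpow_add hx0]
    exact rpow_le_rpow_of_exponent_le hx (by push_cast; linarith)
  have hedge : (2 * x ^ (2 - (1 - δ) / (k + 1))) ^ (k + 1) = 2 ^ (k + 1) * x ^ (2 * k + 1 + δ) := by
    rw [mul_pow, ← rpow_natCast (x ^ _), ← rpow_mul hx0.le]
    congr 2
    push_cast
    field_simp
    ring
  have h2 : (2 : ℝ) ≤ 2 ^ (k + 1) := le_self_pow₀ one_le_two k.succ_ne_zero
  rw [mul_add, hmain, hedge]
  nlinarith [rpow_pos_of_pos hx0 (2 * k + 1 + δ)]

namespace SimpleGraph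

variable {V : Type*} [Fintype V] (G : SimpleGraph V)

theorem le_alphaS {s : ℕ} {A : Finset V} (h : (G.induce (A : Set V)).CliqueFree s) :
    #A ≤ alphaS G s := by
  classical
  exact le_sup (f := card) (mem_filter.mpr ⟨mem_univ _, h⟩)

theorem exists_isNClique_of_alphaS_lt {s : ℕ} {A : Finset V} (h : alphaS G s < #A) :
    ∃ S ⊆ A, G.IsNClique s S := by
  by_contra! hA
  exact h.not_ge <| G.le_alphaS <| (cliqueFree_induce_iff _ _ _).2 fun S hS => hA S hS

variable [DecidableRel G.Adj]

theorem two_mul_card_edgeFinset_pow_le (k : ℕ) :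
    (2 * #G.edgeFinset : ℝ) ^ (k + 1) ≤
      (Fintype.card V : ℝ) ^ k * ∑ v, (G.degree v : ℝ) ^ (k + 1) := by
  have := pow_sum_le_card_mul_sum_pow (s := univ) (f := fun v => (G.degree v : ℝ))
    (fun _ _ => by positivity) k
  rw [← Nat.cast_sum, sum_degrees_eq_twice_card_edges, card_univ] at this
  exact_mod_cast this

theorem card_pow_mul_add_le_sum_degree_pow [Nonempty V] {δ : ℝ} {k r : ℕ}
    (hkr : r - δ ≤ (k + 1) * (1 - δ))
    (hE : (Fintype.card V : ℝ) ^ (2 - (1 - δ) / (k + 1)) ≤ #G.edgeFinset) :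
    (Fintype.card V : ℝ) ^ (k + 1) * (Fintype.card V : ℝ) ^ δ +
        (Fintype.card V : ℝ) ^ r * ((Fintype.card V : ℝ) ^ δ) ^ (k + 1) ≤
      ∑ v, (G.degree v : ℝ) ^ (k + 1) := by
  have hV : (1 : ℝ) ≤ Fintype.card V := Nat.one_le_cast.2 Fintype.card_pos
  refine le_of_mul_le_mul_left ?_ (by positivity : (0 : ℝ) < Fintype.card V ^ k)
  calc _ ≤ (2 * (Fintype.card V : ℝ) ^ (2 - (1 - δ) / (k + 1))) ^ (k + 1) :=
        Real.pow_mul_add_pow_mul_rpow_pow_le hV hkr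
    _ ≤ (2 * #G.edgeFinset : ℝ) ^ (k + 1) := by gcongr
    _ ≤ _ := G.two_mul_card_edgeFinset_pow_le k

variable [DecidableEq V]

def commonNbhd (R : Finset V) : Finset V := {x | ∀ y ∈ R, G.Adj y x}

variable {G}

theorem subset_commonNbhd_comm {R S : Finset V} : R ⊆ G.commonNbhd S ↔ S ⊆ G.commonNbhd R := by
  simp only [subset_iff, commonNbhd, mem_filter, mem_univ, true_and]
  exact ⟨fun h y hy x hx => (h hx y hy).symm, fun h x hx y hy => (h hy x hx).symm⟩

theorem IsNClique.union_of_subset_commonNbhd {a b : ℕ} {S R : Finset V} (hS : G.IsNClique a S)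
    (hR : G.IsNClique b R) (hSR : S ⊆ G.commonNbhd R) : G.IsNClique (a + b) (S ∪ R) := by
  have hadj : ∀ x ∈ S, ∀ y ∈ R, G.Adj y x := fun x hx => by
    simpa [commonNbhd] using hSR hx
  refine ⟨?_, ?_⟩
  · rw [coe_union, IsClique, Set.pairwise_union]
    exact ⟨hS.1, hR.1, fun x hx y hy _ => ⟨(hadj x hx y hy).symm, hadj x hx y hy⟩⟩
  · rw [card_union_of_disjoint, hS.2, hR.2]
    exact Finset.disjoint_left.2 fun x hxS hxR => G.loopless.irrefl x (hadj x hxS x hxR)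

variable (G)

theorem sum_card_filter_subset_commonNbhd {ι : Type*} (A : Finset ι) (R : ι → Finset V) (K : ℕ) :
    ∑ T : Fin K → V, #{i ∈ A | R i ⊆ G.commonNbhd (univ.image T)} =
      ∑ i ∈ A, #(G.commonNbhd (R i)) ^ K := by
  have := sum_card_bipartiteAbove_eq_sum_card_bipartiteBelow (s := univ) (t := A)
    (r := fun (T : Fin K → V) i => R i ⊆ G.commonNbhd (univ.image T))
  refine this.trans (sum_congr rfl fun i _ => ?_)
  rw [← Fintype.card_piFinset_const]
  congr 1
  ext T
  simp [bipartiteBelow, subset_commonNbhd_comm (R := R i), Fintype.mem_piFinset, image_subset_iff]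

theorem sum_card_commonNbhd_image (K : ℕ) :
    ∑ T : Fin K → V, #(G.commonNbhd (univ.image T)) = ∑ v, G.degree v ^ K := by
  have hN : ∀ v, G.commonNbhd {v} = G.neighborFinset v := fun v => by ext; simp [commonNbhd]
  simpa [hN] using G.sum_card_filter_subset_commonNbhd univ (fun v => {v}) K

theorem exists_large_subset_forall_card_commonNbhd [Nonempty V] {K r : ℕ} (hr : 0 < r) {f : ℝ}
    (hf : 0 ≤ f)
    (hdeg : (Fintype.card V : ℝ) ^ K * f + (Fintype.card V : ℝ) ^ r * f ^ K ≤
      ∑ v, (G.degree v : ℝ) ^ K) :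
    ∃ U : Finset V, f ≤ #U ∧ ∀ R ⊆ U, #R = r → f ≤ #(G.commonNbhd R) := by
  set bad : Finset (Finset V) := {R ∈ powersetCard r univ | (#(G.commonNbhd R) : ℝ) < f}
  have hbad : ∑ R ∈ bad, (#(G.commonNbhd R) : ℝ) ^ K ≤ (Fintype.card V : ℝ) ^ r * f ^ K := by
    calc ∑ R ∈ bad, (#(G.commonNbhd R) : ℝ) ^ K
        ≤ ∑ _R ∈ bad, f ^ K := sum_le_sum fun R hR => by
          gcongr
          exact (mem_filter.1 hR).2.le
      _ ≤ (Fintype.card V : ℝ) ^ r * f ^ K := by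
          rw [sum_const, nsmul_eq_mul]
          gcongr
          calc (#bad : ℝ) ≤ #(powersetCard r (univ : Finset V)) := by
                exact_mod_cast card_filter_le _ _
            _ ≤ (Fintype.card V : ℝ) ^ r := by
                rw [card_powersetCard, card_univ]
                exact_mod_cast (Fintype.card V).choose_le_pow r
  obtain ⟨T, -, hT⟩ : ∃ T ∈ (univ : Finset (Fin K → V)),
      f ≤ #(G.commonNbhd (univ.image T)) - #{R ∈ bad | R ⊆ G.commonNbhd (univ.image T)} := by
    refine exists_le_of_sum_le univ_nonempty ?_
    rw [sum_const, card_univ, Fintype.card_pi_const, sum_sub_distrib, nsmul_eq_mul]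
    have h1 := congrArg (Nat.cast : ℕ → ℝ) (G.sum_card_commonNbhd_image K)
    have h2 := congrArg (Nat.cast : ℕ → ℝ) (G.sum_card_filter_subset_commonNbhd bad (fun R => R) K)
    push_cast at h1 h2 ⊢
    rw [h1, h2]
    linarith
  obtain ⟨H, hHcard, hH⟩ := exists_card_le_forall_exists_mem_mem
    {R ∈ bad | R ⊆ G.commonNbhd (univ.image T)} fun R hR => card_pos.1 <| by
      rw [(mem_powersetCard.1 (mem_filter.1 (mem_filter.1 hR).1).1).2]
      exact hr
  refine ⟨G.commonNbhd (univ.image T) \ H, ?_, fun R hRU hRcard => ?_⟩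
  · have : (#(G.commonNbhd (univ.image T)) : ℝ) ≤ #(G.commonNbhd (univ.image T) \ H) + #H := by
      exact_mod_cast card_le_card_sdiff_add_card
    have : (#H : ℝ) ≤ #{R ∈ bad | R ⊆ G.commonNbhd (univ.image T)} := by exact_mod_cast hHcard
    linarith
  · by_contra! hRbad
    obtain ⟨x, hxR, hxH⟩ := hH R <| mem_filter.2
      ⟨mem_filter.2 ⟨mem_powersetCard.2 ⟨subset_univ R, hRcard⟩, hRbad⟩,
        hRU.trans sdiff_subset⟩
    exact (mem_sdiff.1 (hRU hxR)).2 hxH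

theorem le_alphaS_of_forall_card_commonNbhd {s r : ℕ} (hrs : r ≤ s) (hG : G.CliqueFree (s + r))
    {f : ℝ} {U : Finset V} (hU : f ≤ #U) (hUR : ∀ R ⊆ U, #R = r → f ≤ #(G.commonNbhd R)) :
    f ≤ alphaS G s := by
  by_contra! hlt
  obtain ⟨S, hSU, hS⟩ := G.exists_isNClique_of_alphaS_lt (s := s)
    (by exact_mod_cast hlt.trans_le hU)
  obtain ⟨R, hRS, hRcard⟩ := exists_subset_card_eq (hS.2.symm ▸ hrs)
  obtain ⟨S', hS'N, hS'⟩ := G.exists_isNClique_of_alphaS_lt (s := s)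
    (by exact_mod_cast hlt.trans_le (hUR R (hRS.trans hSU) hRcard))
  exact hG _ (hS'.union_of_subset_commonNbhd ⟨hS.1.subset (coe_subset.2 hRS), hRcard⟩ hS'N)

end SimpleGraph

theorem stmt_8 (s r : ℕ) (δ : ℝ) (hr : 1 ≤ r) (hrs : r ≤ s)
    (hδ0 : 0 < δ) (hδ1 : δ < 1) (n : ℕ) (G : SimpleGraph (Fin n))
    (hG : G.CliqueFree (s + r))
    (hE : (n : ℝ) ^ (2 - (1 - δ) / (⌈((r : ℝ) - δ) / (1 - δ)⌉ : ℝ)) ≤ G.edgeSet.ncard) :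
    (n : ℝ) ^ δ ≤ alphaS G s := by
  classical
  rcases n.eq_zero_or_pos with rfl | hn
  · simp [Real.zero_rpow hδ0.ne']
  have : Nonempty (Fin n) := ⟨⟨0, hn⟩⟩
  have hq : 0 < ((r : ℝ) - δ) / (1 - δ) :=
    div_pos (by linarith [(Nat.one_le_cast.2 hr : (1 : ℝ) ≤ r)]) (by linarith)
  obtain ⟨k, hk⟩ := Nat.exists_eq_add_one.2 (Nat.ceil_pos.2 hq)
  have hkr : (r : ℝ) - δ ≤ (k + 1) * (1 - δ) := by
    have := Nat.le_ceil (((r : ℝ) - δ) / (1 - δ))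
    rw [hk, div_le_iff₀ (by linarith)] at this
    exact_mod_cast this
  have hedges : (n : ℝ) ^ (2 - (1 - δ) / (k + 1)) ≤ #G.edgeFinset := by
    rwa [← natCast_ceil_eq_intCast_ceil hq.le, hk, ← SimpleGraph.coe_edgeFinset,
      Set.ncard_coe_finset, Nat.cast_add_one] at hE
  obtain ⟨U, hU, hUR⟩ := G.exists_large_subset_forall_card_commonNbhd hr
    (Real.rpow_nonneg n.cast_nonneg δ)
    (by simpa using G.card_pow_mul_add_le_sum_degree_pow hkr (by simpa using hedges))
  exact G.le_alphaS_of_forall_card_commonNbhd hrs hG hU hUR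
end

section
/- Let L be a line containing b-r points of a set S in a linear hypergraph (any two vertices lie in at most one common edge) in which S is complete (every pair of points of S lies on a common edge), and let R ⊆ S be a set of r points not on L, where b > r ≥ 1. Then the number of edges L_{u,v} covering pairs {u,v} with u ∈ L ∩ S and v ∈ R, and meeting R in at least 2 points, is at most C(r,2); moreover, the total number of distinct edges covering such pairs is at least r(b-r) - r·C(r,2). -/
/-!
Every covering edge other than `L` meets `L` in one point, so the `r (b - r)` pairs of
`(L ∩ S) × R` are covered with each edge `E` accounting for at most `|E ∩ R|` of them. An edge
meeting `R` in at least two points is determined by any two of them, so there are at most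
`C(r, 2)` such edges, each contributing at most `r`; every other edge contributes at most `1`.
-/

open Finset

section

variable {P : Type*}

def IsLinearHypergraph (edges : Finset (Finset P)) : Prop :=
  ∀ E ∈ edges, ∀ E' ∈ edges, ∀ x y : P, x ≠ y → x ∈ E → y ∈ E → x ∈ E' → y ∈ E' → E = E'

namespace IsLinearHypergraph

variable {edges : Finset (Finset P)}

theorem eq_of_one_lt_card_of_subset (h : IsLinearHypergraph edges) {E E' t : Finset P}
    (hE : E ∈ edges) (hE' : E' ∈ edges) (ht : 1 < #t) (htE : t ⊆ E) (htE' : t ⊆ E') :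
    E = E' := by
  obtain ⟨x, hx, y, hy, hxy⟩ := one_lt_card.1 ht
  exact h E hE E' hE' x y hxy (htE hx) (htE hy) (htE' hx) (htE' hy)

variable [DecidableEq P]

theorem card_inter_le_one (h : IsLinearHypergraph edges) {E L : Finset P}
    (hE : E ∈ edges) (hL : L ∈ edges) (hEL : E ≠ L) : #(E ∩ L) ≤ 1 := by
  by_contra! hlt
  exact hEL (h.eq_of_one_lt_card_of_subset hE hL hlt inter_subset_left inter_subset_right)

theorem card_filter_two_le_card_inter_le_choose (h : IsLinearHypergraph edges)
    (R : Finset P) : #{E ∈ edges | 2 ≤ #(E ∩ R)} ≤ (#R).choose 2 := by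
  rw [← card_powersetCard]
  refine card_le_card_of_forall_subsingleton (fun E t => t ⊆ E) ?_ ?_
  · intro E hE
    obtain ⟨t, htER, htcard⟩ := exists_subset_card_eq (mem_filter.1 hE).2
    exact ⟨t, mem_powersetCard.2 ⟨htER.trans inter_subset_right, htcard⟩,
      htER.trans inter_subset_left⟩
  · intro t ht E hE E' hE'
    have htcard : 1 < #t := by rw [(mem_powersetCard.1 ht).2]; norm_num
    exact h.eq_of_one_lt_card_of_subset (mem_filter.1 hE.1).1 (mem_filter.1 hE'.1).1
      htcard hE.2 hE'.2

end IsLinearHypergraph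

variable [DecidableEq P]

theorem sum_card_inter_le (F : Finset (Finset P)) (R : Finset P) :
    ∑ E ∈ F, #(E ∩ R) ≤ #R * #{E ∈ F | 2 ≤ #(E ∩ R)} + #F := by
  rw [← sum_filter_add_sum_filter_not F (fun E => 2 ≤ #(E ∩ R))]
  gcongr
  · rw [mul_comm, ← smul_eq_mul]
    exact sum_le_card_nsmul _ _ _ fun E _ => card_le_card inter_subset_right
  · calc ∑ E ∈ F with ¬2 ≤ #(E ∩ R), #(E ∩ R)
        ≤ #{E ∈ F | ¬2 ≤ #(E ∩ R)} • 1 :=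
          sum_le_card_nsmul _ _ _ fun E hE => by have := (mem_filter.1 hE).2; omega
      _ ≤ #F := by rw [smul_eq_mul, mul_one]; exact card_filter_le _ _

theorem card_mul_card_le_sum_card_inter {edges : Finset (Finset P)}
    (hlinear : IsLinearHypergraph edges) {L U R : Finset P} (hL : L ∈ edges) (hUL : U ⊆ L)
    (hRL : ∀ v ∈ R, v ∉ L)
    (hcover : ∀ u ∈ U, ∀ v ∈ R, ∃ E ∈ edges, u ∈ E ∧ v ∈ E) :
    #U * #R ≤ ∑ E ∈ edges with (∃ u ∈ U, u ∈ E) ∧ ∃ v ∈ R, v ∈ E, #(E ∩ R) := by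
  set F := {E ∈ edges | (∃ u ∈ U, u ∈ E) ∧ ∃ v ∈ R, v ∈ E}
  have hpairs : U ×ˢ R ⊆ F.biUnion fun E => (E ∩ U) ×ˢ (E ∩ R) := by
    rintro ⟨u, v⟩ huv
    obtain ⟨hu, hv⟩ := mem_product.1 huv
    obtain ⟨E, hE, huE, hvE⟩ := hcover u hu v hv
    exact mem_biUnion.2 ⟨E, mem_filter.2 ⟨hE, ⟨u, hu, huE⟩, ⟨v, hv, hvE⟩⟩,
      mem_product.2 ⟨mem_inter.2 ⟨huE, hu⟩, mem_inter.2 ⟨hvE, hv⟩⟩⟩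
  have hmeetU : ∀ E ∈ F, #(E ∩ U) ≤ 1 := by
    intro E hE
    obtain ⟨hE, -, v, hv, hvE⟩ := mem_filter.1 hE
    have hEL : E ≠ L := by rintro rfl; exact hRL v hv hvE
    exact (card_le_card (inter_subset_inter_left hUL)).trans
      (hlinear.card_inter_le_one hE hL hEL)
  calc #U * #R = #(U ×ˢ R) := (card_product U R).symm
    _ ≤ #(F.biUnion fun E => (E ∩ U) ×ˢ (E ∩ R)) := card_le_card hpairs
    _ ≤ ∑ E ∈ F, #((E ∩ U) ×ˢ (E ∩ R)) := card_biUnion_le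
    _ ≤ ∑ E ∈ F, #(E ∩ R) := sum_le_sum fun E hE => by
        rw [card_product]
        exact (Nat.mul_le_mul_right _ (hmeetU E hE)).trans_eq (one_mul _)

end

theorem stmt_11_general {P : Type*} [DecidableEq P] (edges : Finset (Finset P))
    (b r : ℕ)
    (hlinear : ∀ E ∈ edges, ∀ E' ∈ edges, ∀ x y : P, x ≠ y →
      x ∈ E → y ∈ E → x ∈ E' → y ∈ E' → E = E')
    (S : Finset P)
    (hcomplete : ∀ x ∈ S, ∀ y ∈ S, x ≠ y → ∃ E ∈ edges, x ∈ E ∧ y ∈ E)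
    (L : Finset P) (hL : L ∈ edges) (hLS : (L ∩ S).card = b - r)
    (R : Finset P) (hRS : R ⊆ S) (hRcard : R.card = r) (hRL : ∀ v ∈ R, v ∉ L) :
    ((edges.filter (fun E => (∃ u ∈ L ∩ S, u ∈ E) ∧ 2 ≤ (E ∩ R).card)).card
        ≤ r.choose 2) ∧
    r * (b - r) - r * r.choose 2 ≤
      (edges.filter (fun E => (∃ u ∈ L ∩ S, u ∈ E) ∧ ∃ v ∈ R, v ∈ E)).card := by
  have hlinear : IsLinearHypergraph edges := hlinear
  set F := edges.filter fun E => (∃ u ∈ L ∩ S, u ∈ E) ∧ ∃ v ∈ R, v ∈ E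
  have hmulti := hlinear.card_filter_two_le_card_inter_le_choose R
  rw [hRcard] at hmulti
  refine ⟨(card_le_card (monotone_filter_right _ fun _ _ => And.right)).trans hmulti, ?_⟩
  have hcover : ∀ u ∈ L ∩ S, ∀ v ∈ R, ∃ E ∈ edges, u ∈ E ∧ v ∈ E := fun u hu v hv =>
    hcomplete u (mem_inter.1 hu).2 v (hRS hv) fun h => hRL v hv (h ▸ (mem_inter.1 hu).1)
  have hmultiF : #{E ∈ F | 2 ≤ #(E ∩ R)} ≤ r.choose 2 :=
    (card_le_card (filter_subset_filter _ (filter_subset _ _))).trans hmulti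
  have hcount : r * (b - r) ≤ r * r.choose 2 + #F :=
    calc r * (b - r) = #(L ∩ S) * #R := by rw [hLS, hRcard, mul_comm]
      _ ≤ ∑ E ∈ F, #(E ∩ R) :=
          card_mul_card_le_sum_card_inter hlinear hL inter_subset_left hRL hcover
      _ ≤ #R * #{E ∈ F | 2 ≤ #(E ∩ R)} + #F := sum_card_inter_le F R
      _ ≤ r * r.choose 2 + #F := by rw [hRcard]; gcongr
  omega

theorem stmt_11 {P : Type*} [DecidableEq P] (edges : Finset (Finset P))
    (b r : ℕ) (hr : 1 ≤ r) (hbr : r < b)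
    (hlinear : ∀ E ∈ edges, ∀ E' ∈ edges, ∀ x y : P, x ≠ y →
      x ∈ E → y ∈ E → x ∈ E' → y ∈ E' → E = E')
    (S : Finset P)
    (hcomplete : ∀ x ∈ S, ∀ y ∈ S, x ≠ y → ∃ E ∈ edges, x ∈ E ∧ y ∈ E)
    (L : Finset P) (hL : L ∈ edges) (hLS : (L ∩ S).card = b - r)
    (R : Finset P) (hRS : R ⊆ S) (hRcard : R.card = r) (hRL : ∀ v ∈ R, v ∉ L) :
    ((edges.filter (fun E => (∃ u ∈ L ∩ S, u ∈ E) ∧ 2 ≤ (E ∩ R).card)).card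
        ≤ r.choose 2) ∧
    r * (b - r) - r * r.choose 2 ≤
      (edges.filter (fun E => (∃ u ∈ L ∩ S, u ∈ E) ∧ ∃ v ∈ R, v ∈ E)).card :=
  stmt_11_general edges b r hlinear S hcomplete L hL hLS R hRS hRcard hRL
end

section
/- In a generalized quadrangle of order (p,q), no three lines pairwise intersect in three distinct points (no triangle of lines). Consequently, any graph obtained by placing, on each line, a complete s-partite graph (for any partition of the points of that line into s classes) and taking the union over all lines, is K_{s+1}-free. -/
/-!
There is no triangle of lines: if `x` lies on two of its sides and off the third side `L₃`, those
two sides meet `L₃` in two distinct points collinear with `x`, contradicting the uniqueness of the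
projection of `x` onto `L₃`. Hence if two adjacent clique vertices lie on a line `L`, so does every
other vertex `z` of the clique (otherwise `L` and the lines joining `z` to them form a triangle).
On `L` adjacent points lie in different `χ L`-classes, so the clique has at most `s` vertices.
-/

section Quadrangle

variable {P : Type*}

def LinesMeetAtMostOnce (lines : Finset (Finset P)) : Prop :=
  ∀ L ∈ lines, ∀ L' ∈ lines, ∀ x y : P, x ≠ y → x ∈ L → y ∈ L → x ∈ L' → y ∈ L' → L = L'

def HasUniqueProjection (lines : Finset (Finset P)) : Prop :=
  ∀ u : P, ∀ L ∈ lines, u ∉ L → ∃! w, w ∈ L ∧ ∃ M ∈ lines, u ∈ M ∧ w ∈ M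

variable {lines : Finset (Finset P)}

theorem not_triangle (hunique : LinesMeetAtMostOnce lines) (hproj : HasUniqueProjection lines)
    {L₁ L₂ L₃ : Finset P} (h₁ : L₁ ∈ lines) (h₂ : L₂ ∈ lines) (h₃ : L₃ ∈ lines) (h₂₃ : L₂ ≠ L₃)
    {x y z : P} (hxy : x ≠ y) (hyz : y ≠ z) (hx₁ : x ∈ L₁) (hx₂ : x ∈ L₂) (hy₂ : y ∈ L₂)
    (hy₃ : y ∈ L₃) (hz₃ : z ∈ L₃) (hz₁ : z ∈ L₁) : False := by
  have hx₃ : x ∉ L₃ := fun hx₃ => h₂₃ (hunique L₂ h₂ L₃ h₃ x y hxy hx₂ hy₂ hx₃ hy₃)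
  obtain ⟨w, -, hw⟩ := hproj x L₃ h₃ hx₃
  exact hyz ((hw y ⟨hy₃, L₂, h₂, hx₂, hy₂⟩).trans (hw z ⟨hz₃, L₁, h₁, hx₁, hz₁⟩).symm)

variable {G : SimpleGraph P} {t : Finset P}

theorem SimpleGraph.IsClique.subset_line (hunique : LinesMeetAtMostOnce lines)
    (hproj : HasUniqueProjection lines) (hG : ∀ x y, G.Adj x y → ∃ L ∈ lines, x ∈ L ∧ y ∈ L)
    (ht : G.IsClique (t : Set P)) {L : Finset P} (hL : L ∈ lines) {x y : P} (hx : x ∈ t)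
    (hy : y ∈ t) (hxy : x ≠ y) (hxL : x ∈ L) (hyL : y ∈ L) : t ⊆ L := by
  intro z hz
  by_contra hzL
  have hzx : z ≠ x := fun h => hzL (h ▸ hxL)
  have hzy : z ≠ y := fun h => hzL (h ▸ hyL)
  obtain ⟨M, hM, hxM, hzM⟩ := hG x z (ht hx hz hzx.symm)
  obtain ⟨N, hN, hyN, hzN⟩ := hG y z (ht hy hz hzy.symm)
  exact not_triangle hunique hproj hM hL hN (fun h => hzL (h ▸ hzN)) hxy hzy.symm
    hxM hxL hyL hyN hzN hzM

variable {s : ℕ} {χ : Finset P → P → Fin s}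

theorem injOn_of_isClique_of_subset_line (hunique : LinesMeetAtMostOnce lines)
    (hG : ∀ x y, G.Adj x y → ∃ L ∈ lines, x ∈ L ∧ y ∈ L ∧ χ L x ≠ χ L y)
    (ht : G.IsClique (t : Set P)) {L : Finset P} (hL : L ∈ lines) (htL : t ⊆ L) :
    Set.InjOn (χ L) t := by
  intro a ha b hb hab
  by_contra hne
  obtain ⟨L', hL', haL', hbL', hχ⟩ := hG a b (ht ha hb hne)
  obtain rfl := hunique L' hL' L hL a b hne haL' hbL' (htL ha) (htL hb)
  exact hχ hab

theorem card_le_of_isClique (hunique : LinesMeetAtMostOnce lines)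
    (hproj : HasUniqueProjection lines)
    (hG : ∀ x y, G.Adj x y → ∃ L ∈ lines, x ∈ L ∧ y ∈ L ∧ χ L x ≠ χ L y)
    (ht : G.IsClique (t : Set P)) : t.card ≤ s := by
  obtain ⟨L, hL⟩ : ∃ L, Set.InjOn (χ L) t := by
    by_cases hsub : (t : Set P).Subsingleton
    · exact ⟨∅, hsub.injOn _⟩
    obtain ⟨x, hx, y, hy, hxy⟩ := Set.not_subsingleton_iff.mp hsub
    obtain ⟨L, hL, hxL, hyL, -⟩ := hG x y (ht hx hy hxy)
    have hcollinear : ∀ x y, G.Adj x y → ∃ L ∈ lines, x ∈ L ∧ y ∈ L := fun x y hxy => by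
      obtain ⟨L, hL, hxL, hyL, -⟩ := hG x y hxy
      exact ⟨L, hL, hxL, hyL⟩
    exact ⟨L, injOn_of_isClique_of_subset_line hunique hG ht hL
      (ht.subset_line hunique hproj hcollinear hL hx hy hxy hxL hyL)⟩
  simpa using Finset.card_le_card_of_injOn (χ L) (fun _ _ => Finset.mem_univ _) hL

end Quadrangle

theorem stmt_14_general {P : Type*} (s : ℕ)
    (lines : Finset (Finset P))
    (hunique : ∀ L ∈ lines, ∀ L' ∈ lines, ∀ x y : P, x ≠ y →
      x ∈ L → y ∈ L → x ∈ L' → y ∈ L' → L = L')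
    (hgq : ∀ u : P, ∀ L ∈ lines, u ∉ L →
      ∃! w, w ∈ L ∧ ∃ M ∈ lines, u ∈ M ∧ w ∈ M)
    (χ : Finset P → P → Fin s)
    (G : SimpleGraph P)
    (hG : ∀ x y : P, G.Adj x y ↔
      (x ≠ y ∧ ∃ L ∈ lines, x ∈ L ∧ y ∈ L ∧ χ L x ≠ χ L y)) :
    (∀ L₁ ∈ lines, ∀ L₂ ∈ lines, ∀ L₃ ∈ lines,
      L₁ ≠ L₂ → L₂ ≠ L₃ → L₁ ≠ L₃ →
      ∀ x y z : P, x ≠ y → y ≠ z → x ≠ z →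
        x ∈ L₁ → x ∈ L₂ → y ∈ L₂ → y ∈ L₃ → z ∈ L₃ → z ∈ L₁ → False) ∧
    G.CliqueFree (s + 1) := by
  refine ⟨fun L₁ h₁ L₂ h₂ L₃ h₃ _ h₂₃ _ x y z hxy hyz _ =>
    not_triangle hunique hgq h₁ h₂ h₃ h₂₃ hxy hyz, fun t ht => ?_⟩
  have := card_le_of_isClique hunique hgq (fun x y hxy => ((hG x y).mp hxy).2) ht.isClique
  have := ht.card_eq
  omega

theorem stmt_14 {P : Type*} [Fintype P] [DecidableEq P] (p q s : ℕ) (hs : 1 ≤ s)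
    (lines : Finset (Finset P))
    (hunique : ∀ L ∈ lines, ∀ L' ∈ lines, ∀ x y : P, x ≠ y →
      x ∈ L → y ∈ L → x ∈ L' → y ∈ L' → L = L')
    (hgq : ∀ u : P, ∀ L ∈ lines, u ∉ L →
      ∃! w, w ∈ L ∧ ∃ M ∈ lines, u ∈ M ∧ w ∈ M)
    (hlinecard : ∀ L ∈ lines, L.card = p + 1)
    (hpointcard : ∀ x : P, (lines.filter (fun L => x ∈ L)).card = q + 1)
    (χ : Finset P → P → Fin s)
    (G : SimpleGraph P)
    (hG : ∀ x y : P, G.Adj x y ↔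
      (x ≠ y ∧ ∃ L ∈ lines, x ∈ L ∧ y ∈ L ∧ χ L x ≠ χ L y)) :
    (∀ L₁ ∈ lines, ∀ L₂ ∈ lines, ∀ L₃ ∈ lines,
      L₁ ≠ L₂ → L₂ ≠ L₃ → L₁ ≠ L₃ →
      ∀ x y z : P, x ≠ y → y ≠ z → x ≠ z →
        x ∈ L₁ → x ∈ L₂ → y ∈ L₂ → y ∈ L₃ → z ∈ L₃ → z ∈ L₁ → False) ∧
    G.CliqueFree (s + 1) :=
  stmt_14_general s lines hunique hgq χ G hG
end

section
/- Let s ≥ 2 and suppose H is a K_{s+1}-free graph on m vertices with α_s(H) < f, and B is a K_{s,s}-free bipartite graph between two disjoint copies of the vertex set of H. Let G be the graph on 2m vertices consisting of two disjoint copies of H together with the edges of B. Then G is K_{2s}-free and α_s(G) < 2f. -/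
/-!
A clique of `G` meets each copy of `H` in a clique of `H`, so in at most `s` vertices; a clique
with `2s` vertices would therefore have exactly `s` in each copy, and these two halves span a
`K_{s,s}` in `B`. A `K_s`-free vertex set of `G` meets each copy in a `K_s`-free set of `H`, so
`α_s(G) ≤ 2 α_s(H) < 2f`.
-/

open Finset Function

namespace Finset

variable {α β : Type*}

noncomputable def sliceAt (t : Finset (β × α)) (b : β) : Finset α :=
  t.preimage (Prod.mk b) (Prod.mk_right_injective b).injOn

@[simp]
theorem coe_sliceAt (t : Finset (β × α)) (b : β) : (t.sliceAt b : Set α) = Prod.mk b ⁻¹' t :=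
  coe_preimage _ _

theorem map_sliceAt [DecidableEq β] (t : Finset (β × α)) (b : β) :
    (t.sliceAt b).map (Embedding.sectR b α) = {x ∈ t | x.1 = b} := by
  ext ⟨b', a⟩
  simp only [mem_map, sliceAt, mem_preimage, Embedding.sectR_apply, mem_filter]
  constructor
  · rintro ⟨a', ha', h⟩
    obtain ⟨rfl, rfl⟩ := Prod.mk.inj h
    exact ⟨ha', rfl⟩
  · rintro ⟨ha, rfl⟩
    exact ⟨a, ha, rfl⟩

theorem sum_card_sliceAt [Fintype β] (t : Finset (β × α)) : ∑ b, #(t.sliceAt b) = #t := by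
  classical
  rw [card_eq_sum_card_fiberwise (f := Prod.fst) (t := univ) (fun _ _ => mem_coe.2 (mem_univ _))]
  refine sum_congr rfl fun b _ => ?_
  rw [← card_map (Embedding.sectR b α)]
  convert congrArg card (map_sliceAt t b)

end Finset

namespace SimpleGraph

variable {α β : Type*} {G : SimpleGraph β} {n : ℕ}

theorem IsClique.preimage {s : Set β} (h : G.IsClique s) {f : α → β} (hf : Injective f) :
    (G.comap f).IsClique (f ⁻¹' s) :=
  fun _ ha _ hb hab => h ha hb (hf.ne hab)

theorem CliqueFreeOn.preimage {s : Set β} (h : G.CliqueFreeOn s n) (f : α ↪ β) :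
    (G.comap f).CliqueFreeOn (f ⁻¹' s) n := fun t hts ht =>
  h (by rw [coe_map]; exact Set.image_subset_iff.2 hts) ((ht.map (f := f)).mono (map_comap_le f G))

theorem IsClique.card_lt_of_cliqueFree {t : Finset β} (ht : G.IsClique t) (hG : G.CliqueFree n) :
    #t < n := by
  by_contra! h
  obtain ⟨u, hut, hu⟩ := exists_subset_card_eq h
  exact hG u ⟨ht.subset hut, hu⟩

end SimpleGraph

open SimpleGraph

theorem card_le_alphaS {V : Type*} [Fintype V] {G : SimpleGraph V} {s : ℕ} {A : Finset V}
    (h : G.CliqueFreeOn A s) : #A ≤ alphaS G s := by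
  classical
  exact le_sup (f := card) (mem_filter.2 ⟨mem_univ _, (G.cliqueFree_induce_iff _ _).2 h⟩)

section TwoCopies

variable {α : Type*}

theorem alphaS_le_add [Fintype α] (G : SimpleGraph (Bool × α)) (s : ℕ) :
    alphaS G s ≤ alphaS (G.comap (Prod.mk false)) s + alphaS (G.comap (Prod.mk true)) s := by
  classical
  refine Finset.sup_le fun A hA => ?_
  have hA : G.CliqueFreeOn A s := (G.cliqueFree_induce_iff _ _).1 (mem_filter.1 hA).2
  have hslice (b : Bool) : #(A.sliceAt b) ≤ alphaS (G.comap (Prod.mk b)) s :=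
    card_le_alphaS (by rw [coe_sliceAt]; exact hA.preimage (Embedding.sectR b α))
  rw [← sum_card_sliceAt A, Fintype.sum_bool, add_comm]
  exact add_le_add (hslice false) (hslice true)

theorem cliqueFree_two_mul {G : SimpleGraph (Bool × α)} {s : ℕ}
    (hside : ∀ b, (G.comap (Prod.mk b)).CliqueFree (s + 1))
    (hcross : ¬∃ A A' : Finset α, #A = s ∧ #A' = s ∧
      ∀ x ∈ A, ∀ y ∈ A', G.Adj (false, x) (true, y)) :
    G.CliqueFree (2 * s) := by
  rintro t ⟨ht, hcard⟩
  have hlt (b : Bool) : #(t.sliceAt b) < s + 1 := by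
    refine IsClique.card_lt_of_cliqueFree ?_ (hside b)
    rw [coe_sliceAt]
    exact ht.preimage (Prod.mk_right_injective b)
  have hsum := sum_card_sliceAt t
  rw [Fintype.sum_bool, hcard] at hsum
  have := hlt false
  have := hlt true
  refine hcross ⟨t.sliceAt false, t.sliceAt true, by omega, by omega, fun x hx y hy => ?_⟩
  rw [← mem_coe, coe_sliceAt] at hx hy
  exact ht hx hy (by simp)

end TwoCopies

theorem stmt_16_general (s m f : ℕ)
    (H : SimpleGraph (Fin m)) (hH : H.CliqueFree (s + 1)) (hα : alphaS H s < f)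
    (B : Fin m → Fin m → Prop)
    (hB : ¬∃ A A' : Finset (Fin m), A.card = s ∧ A'.card = s ∧
      ∀ x ∈ A, ∀ y ∈ A', B x y)
    (G : SimpleGraph (Bool × Fin m))
    (hG : ∀ u v : Fin m,
      (G.Adj (false, u) (false, v) ↔ H.Adj u v) ∧
      (G.Adj (true, u) (true, v) ↔ H.Adj u v) ∧
      (G.Adj (false, u) (true, v) ↔ B u v)) :
    G.CliqueFree (2 * s) ∧ alphaS G s < 2 * f := by
  have hside (b : Bool) : G.comap (Prod.mk b) = H := by
    ext u v
    cases b
    exacts [(hG u v).1, (hG u v).2.1]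
  refine ⟨cliqueFree_two_mul (fun b => hside b ▸ hH) ?_, ?_⟩
  · simpa only [(hG _ _).2.2] using hB
  · calc alphaS G s ≤ alphaS H s + alphaS H s := by simpa only [hside] using alphaS_le_add G s
      _ < 2 * f := by omega

theorem stmt_16 (s m f : ℕ) (hs : 2 ≤ s)
    (H : SimpleGraph (Fin m)) (hH : H.CliqueFree (s + 1)) (hα : alphaS H s < f)
    (B : Fin m → Fin m → Prop)
    (hB : ¬∃ A A' : Finset (Fin m), A.card = s ∧ A'.card = s ∧
      ∀ x ∈ A, ∀ y ∈ A', B x y)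
    (G : SimpleGraph (Bool × Fin m))
    (hG : ∀ u v : Fin m,
      (G.Adj (false, u) (false, v) ↔ H.Adj u v) ∧
      (G.Adj (true, u) (true, v) ↔ H.Adj u v) ∧
      (G.Adj (false, u) (true, v) ↔ B u v)) :
    G.CliqueFree (2 * s) ∧ alphaS G s < 2 * f :=
  stmt_16_general s m f H hH hα B hB G hG
end
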